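/- Let S be a commutative, cancellative monoid such that L(s) is finite for all s ∈ S, and let m ∈ 𝒜(S). Then L(s + m) = L(s) + 1 for all s ∈ S if and only if L(φ_S(c_a)) = L(−m + φ_S(c_a)) + 1 for all (c_a) ∈ MinRepl_m(S). -/

import Mathlib

/-!
The forward direction is the case `s = -m + φ(c)`. Conversely, appending `[m]` to a longest
factorization of `s` gives `L(s) + 1 ≤ L(s + m)`. For the other inequality take a longest
factorization `z` of `s + m`. If `[m]` occurs in `z`, removing it leaves a factorization of `s`.
Otherwise `z ∈ Repl_m(S)`, so, the coordinatewise order being well founded, `z ≥ c` for some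
`c ∈ MinRepl_m(S)`. Replacing the part `c` of `z` by `[m]` together with a longest factorization
of `-m + φ(c)` costs at most one in length because `L(φ(c)) = L(-m + φ(c)) + 1`, and what remains
after `[m]` is a factorization of `s`.
-/

namespace Paper

/-- The additive congruence on `S` identifying associate elements
(`s ∼ t` iff `s + u = t` for some additive unit `u`). -/
def assocCon (S : Type*) [AddCancelCommMonoid S] : AddCon S where
  r s t := ∃ u : AddUnits S, s + (u : S) = t
  iseqv := by
    refine ⟨fun s => ⟨0, by simp⟩, ?_, ?_⟩
    · rintro s t ⟨u, rfl⟩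
      exact ⟨-u, by rw [add_assoc, AddUnits.add_neg, add_zero]⟩
    · rintro s t w ⟨u, rfl⟩ ⟨v, rfl⟩
      exact ⟨u + v, by rw [AddUnits.val_add, add_assoc]⟩
  add' := by
    rintro a b c d ⟨u, rfl⟩ ⟨v, rfl⟩
    refine ⟨u + v, ?_⟩
    rw [AddUnits.val_add]
    abel

/-- The reduced monoid `S_red = S / U(S)`. -/
abbrev Red (S : Type*) [AddCancelCommMonoid S] := (assocCon S).Quotient

variable {S : Type*} [AddCancelCommMonoid S]

/-- The class `[s]` of `s` in `S_red`. -/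
def cls (s : S) : Red S := (assocCon S).mk' s

/-- `a` is an atom: a nonzero nonunit such that in any decomposition
`b + c = a`, one of `b`, `c` is a unit. -/
def IsAddAtom {M : Type*} [AddMonoid M] (a : M) : Prop :=
  a ≠ 0 ∧ ¬ IsAddUnit a ∧ ∀ b c : M, b + c = a → IsAddUnit b ∨ IsAddUnit c

/-- The length `|(c_a)|` of a tuple. -/
def flen (c : Red S →₀ ℕ) : ℕ := c.sum fun _ n => n

/-- The factorization homomorphism `φ_S`. -/
def phi (c : Red S →₀ ℕ) : Red S := c.sum fun x n => n • x

/-- The set of factorizations `Z(s)`: finitely supported tuples indexed by the atoms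
of `S_red` summing to `[s]`. -/
def ZSet (s : S) : Set (Red S →₀ ℕ) :=
  {c | (∀ x ∈ c.support, IsAddAtom x) ∧ phi c = cls s}

/-- The longest factorization length `L(s)`. -/
noncomputable def lenL (s : S) : ℕ := sSup (flen '' ZSet s)

/-- The shortest factorization length `ℓ(s)`. -/
noncomputable def lenl (s : S) : ℕ := sInf (flen '' ZSet s)

/-- `L(s)` is (defined and) finite. -/
def LFinite (s : S) : Prop := (ZSet s).Nonempty ∧ BddAbove (flen '' ZSet s)

/-- `Repl_m(S)`: tuples over the atoms of `S_red` other than `[m]` whose evaluation,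
after subtracting `m`, stays in `S`. -/
def ReplSet (m : S) : Set (Red S →₀ ℕ) :=
  {c | (∀ x ∈ c.support, IsAddAtom x ∧ x ≠ cls m) ∧ ∃ s t : S, cls s = phi c ∧ m + t = s}

/-- `MinRepl_m(S)`: the minimal elements of `Repl_m(S)` under the coordinatewise order. -/
def MinReplSet (m : S) : Set (Red S →₀ ℕ) :=
  {c ∈ ReplSet m | ∀ c' ∈ ReplSet m, c' ≤ c → c' = c}

lemma cls_add (a b : S) : cls (a + b) = cls a + cls b :=
  map_add (assocCon S).mk' a b

lemma cls_zero : cls (0 : S) = 0 :=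
  map_zero (assocCon S).mk'

lemma cls_surjective : Function.Surjective (cls : S → Red S) :=
  AddCon.mk'_surjective

lemma cls_eq_cls_iff {a b : S} : cls a = cls b ↔ ∃ u : AddUnits S, a + (u : S) = b :=
  (assocCon S).eq

lemma cls_eq_zero_iff {s : S} : cls s = 0 ↔ IsAddUnit s := by
  rw [← cls_zero, cls_eq_cls_iff]
  constructor
  · rintro ⟨u, hu⟩
    exact isAddUnit_of_add_isAddUnit_left (hu ▸ isAddUnit_zero)
  · rintro ⟨v, rfl⟩
    exact ⟨-v, v.add_neg⟩

lemma isAddUnit_red_iff {x : Red S} : IsAddUnit x ↔ x = 0 := by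
  refine ⟨fun hx => ?_, fun hx => hx ▸ isAddUnit_zero⟩
  obtain ⟨y, hy⟩ := isAddUnit_iff_exists.mp hx
  obtain ⟨a, rfl⟩ := cls_surjective x
  obtain ⟨b, rfl⟩ := cls_surjective y
  rw [← cls_add, cls_eq_zero_iff] at hy
  exact cls_eq_zero_iff.mpr (isAddUnit_of_add_isAddUnit_left hy.1)

lemma isAddUnit_cls_iff {s : S} : IsAddUnit (cls s) ↔ IsAddUnit s := by
  rw [isAddUnit_red_iff, cls_eq_zero_iff]

instance : IsLeftCancelAdd (Red S) where
  add_left_cancel x y z h := by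
    obtain ⟨a, rfl⟩ := cls_surjective x
    obtain ⟨b, rfl⟩ := cls_surjective y
    obtain ⟨c, rfl⟩ := cls_surjective z
    replace h : cls a + cls b = cls a + cls c := h
    rw [← cls_add, ← cls_add, cls_eq_cls_iff] at h
    obtain ⟨u, hu⟩ := h
    exact cls_eq_cls_iff.mpr ⟨u, add_left_cancel (a := a) (by rw [← hu, add_assoc])⟩

lemma IsAddAtom.cls {m : S} (hm : IsAddAtom m) : IsAddAtom (cls m) := by
  obtain ⟨-, hnu, hsplit⟩ := hm
  refine ⟨fun h => hnu (cls_eq_zero_iff.mp h), fun h => hnu (isAddUnit_cls_iff.mp h), ?_⟩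
  intro x y hxy
  obtain ⟨a, rfl⟩ := cls_surjective x
  obtain ⟨b, rfl⟩ := cls_surjective y
  obtain ⟨u, hu⟩ := cls_eq_cls_iff.mp ((cls_add a b).symm.trans hxy)
  rw [add_assoc] at hu
  refine (hsplit a _ hu).imp isAddUnit_cls_iff.mpr fun hb => ?_
  exact isAddUnit_cls_iff.mpr (isAddUnit_of_add_isAddUnit_left hb)

lemma phi_add (c d : Red S →₀ ℕ) : phi (c + d) = phi c + phi d :=
  Finsupp.sum_add_index' (fun x => zero_smul ℕ x) (fun x k n => add_smul k n x)

lemma phi_single (x : Red S) (n : ℕ) : phi (Finsupp.single x n) = n • x :=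
  Finsupp.sum_single_index (zero_smul ℕ x)

lemma flen_add (c d : Red S →₀ ℕ) : flen (c + d) = flen c + flen d :=
  Finsupp.sum_add_index' (fun _ => rfl) (fun _ _ _ => rfl)

lemma flen_single (x : Red S) (n : ℕ) : flen (Finsupp.single x n) = n :=
  Finsupp.sum_single_index rfl

lemma LFinite.exists_flen_eq_lenL {s : S} (hs : LFinite s) : ∃ z ∈ ZSet s, flen z = lenL s :=
  Nat.sSup_mem (hs.1.image flen) hs.2

lemma flen_le_lenL {s : S} (hs : BddAbove (flen '' ZSet s)) {z : Red S →₀ ℕ} (hz : z ∈ ZSet s) :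
    flen z ≤ lenL s :=
  le_csSup hs ⟨z, hz, rfl⟩

lemma lenL_le_of_forall_exists {a b : S} {k : ℕ} (ha : LFinite a) (hb : BddAbove (flen '' ZSet b))
    (h : ∀ z ∈ ZSet a, ∃ z' ∈ ZSet b, flen z ≤ flen z' + k) : lenL a ≤ lenL b + k := by
  obtain ⟨z, hz, hzlen⟩ := ha.exists_flen_eq_lenL
  obtain ⟨z', hz', hle⟩ := h z hz
  rw [← hzlen]
  exact hle.trans (Nat.add_le_add_right (flen_le_lenL hb hz') k)

lemma add_mem_ZSet {a b : S} {c d : Red S →₀ ℕ} (hc : c ∈ ZSet a) (hd : d ∈ ZSet b) :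
    c + d ∈ ZSet (a + b) := by
  classical
  refine ⟨fun x hx => ?_, by rw [phi_add, hc.2, hd.2, cls_add]⟩
  rcases Finset.mem_union.mp (Finsupp.support_add hx) with h | h
  exacts [hc.1 x h, hd.1 x h]

lemma single_mem_ZSet {m : S} (hm : IsAddAtom m) : Finsupp.single (cls m) 1 ∈ ZSet m := by
  refine ⟨fun x hx => ?_, by rw [phi_single, one_smul]⟩
  rw [Finset.mem_singleton.mp (Finsupp.support_single_subset hx)]
  exact hm.cls

lemma lenL_add_one_le {m s : S} (hm : IsAddAtom m) (hs : LFinite s)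
    (hsm : BddAbove (flen '' ZSet (s + m))) : lenL s + 1 ≤ lenL (s + m) := by
  obtain ⟨w, hw, hwlen⟩ := hs.exists_flen_eq_lenL
  have := flen_le_lenL hsm (add_mem_ZSet hw (single_mem_ZSet hm))
  rwa [flen_add, flen_single, hwlen] at this

lemma mem_ZSet_of_le {c z : Red S →₀ ℕ} {s a : S} (hz : z ∈ ZSet s) (hcz : c ≤ z)
    (ha : cls a = phi c) : c ∈ ZSet a :=
  ⟨fun x hx => hz.1 x (Finsupp.support_mono hcz hx), ha.symm⟩

lemma exists_mem_ZSet_of_cls_mem_support {m s : S} {z : Red S →₀ ℕ} (hz : z ∈ ZSet (s + m))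
    (hm : cls m ∈ z.support) : ∃ z' ∈ ZSet s, flen z = flen z' + 1 := by
  have hle : Finsupp.single (cls m) 1 ≤ z :=
    Finsupp.single_le_iff.mpr (Nat.one_le_iff_ne_zero.mpr (Finsupp.mem_support_iff.mp hm))
  set z' := z - Finsupp.single (cls m) 1
  have hz_eq : z = z' + Finsupp.single (cls m) 1 := (tsub_add_cancel_of_le hle).symm
  refine ⟨z', mem_ZSet_of_le hz tsub_le_self (add_left_cancel (a := cls m) ?_), ?_⟩
  · rw [← cls_add, add_comm, ← hz.2, hz_eq, phi_add, phi_single, one_smul, add_comm]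
  · rw [hz_eq, flen_add, flen_single]

lemma mem_replSet_of_cls_notMem_support {m s : S} {z : Red S →₀ ℕ} (hz : z ∈ ZSet (s + m))
    (hm : cls m ∉ z.support) : z ∈ ReplSet m :=
  ⟨fun x hx => ⟨hz.1 x hx, fun h => hm (h ▸ hx)⟩, s + m, s, hz.2.symm, add_comm m s⟩

lemma exists_mem_minReplSet_le {m : S} {c : Red S →₀ ℕ} (hc : c ∈ ReplSet m) :
    ∃ c' ∈ MinReplSet m, c' ≤ c := by
  obtain ⟨c', hc'c, hmin⟩ := exists_minimal_le_of_wellFoundedLT (· ∈ ReplSet m) c hc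
  exact ⟨c', ⟨hmin.prop, fun c'' hc'' hle => hmin.eq_of_le hc'' hle⟩, hc'c⟩

lemma exists_mem_ZSet_of_replacement {m s s₀ t₀ : S} {c z : Red S →₀ ℕ} (hz : z ∈ ZSet (s + m))
    (hcz : c ≤ z) (hcs : cls s₀ = phi c) (hmt : m + t₀ = s₀)
    (hs₀ : BddAbove (flen '' ZSet s₀)) (ht₀ : LFinite t₀) (hL : lenL s₀ ≤ lenL t₀ + 1) :
    ∃ z' ∈ ZSet s, flen z ≤ flen z' + 1 := by
  set d := z - c
  have hz_eq : z = c + d := (add_tsub_cancel_of_le hcz).symm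
  obtain ⟨r, hr⟩ := cls_surjective (phi d)
  obtain ⟨w, hw, hwlen⟩ := ht₀.exists_flen_eq_lenL
  have hwd := add_mem_ZSet hw (mem_ZSet_of_le hz tsub_le_self hr)
  have hs : cls (t₀ + r) = cls s := by
    refine add_left_cancel (a := cls m) ?_
    rw [← cls_add, ← cls_add, ← add_assoc, hmt, add_comm m s, cls_add, hcs, hr, ← phi_add, ← hz_eq,
      hz.2, cls_add]
  refine ⟨w + d, ⟨hwd.1, hwd.2.trans hs⟩, ?_⟩
  have hc := flen_le_lenL hs₀ (mem_ZSet_of_le hz hcz hcs)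
  rw [hz_eq, flen_add, flen_add, hwlen]
  omega

lemma lenL_add_le_of_minReplSet {m : S} (hfin : ∀ s : S, LFinite s)
    (H : ∀ c ∈ MinReplSet m, ∀ s t : S, cls s = phi c → m + t = s → lenL s = lenL t + 1) (s : S) :
    lenL (s + m) ≤ lenL s + 1 := by
  refine lenL_le_of_forall_exists (hfin _) (hfin s).2 fun z hz => ?_
  by_cases hm : cls m ∈ z.support
  · obtain ⟨z', hz', hlen⟩ := exists_mem_ZSet_of_cls_mem_support hz hm
    exact ⟨z', hz', hlen.le⟩
  · obtain ⟨c, hc, hcz⟩ := exists_mem_minReplSet_le (mem_replSet_of_cls_notMem_support hz hm)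
    obtain ⟨s₀, t₀, hcs, hmt⟩ := hc.1.2
    exact exists_mem_ZSet_of_replacement hz hcz hcs hmt (hfin s₀).2 (hfin t₀)
      (H c hc s₀ t₀ hcs hmt).le

theorem statement4 {S : Type*} [AddCancelCommMonoid S] (m : S)
    (hm : IsAddAtom m) (hfin : ∀ s : S, LFinite s) :
    (∀ s : S, lenL (s + m) = lenL s + 1) ↔
      (∀ c ∈ MinReplSet m, ∀ s t : S, cls s = phi c → m + t = s → lenL s = lenL t + 1) := by
  refine ⟨fun H c _ s t _ hmt => ?_, fun H s => ?_⟩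
  · rw [← hmt, add_comm m t]
    exact H t
  · exact le_antisymm (lenL_add_le_of_minReplSet hfin H s) (lenL_add_one_le hm (hfin s) (hfin _).2)

end Paper
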